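/- arXiv:1711.07029 — 3 statements merged into one kernel-verified Lean document; each statement's English description precedes it below -/
import Mathlib

section
/- Let Σ ⊂ ℤ³ be the six-element set of unit step vectors {e₁, −e₁, e₂, −e₂, e₃, −e₃}. For all integers n and k with n ≥ k + 1 ≥ 4, there exists a universal cycle for the set P_{n,k} of three-dimensional lattice paths of length n ending within ℓ¹-distance k of the origin, i.e., words w : Fin n → Σ with ‖∑_{i} w(i)‖₁ ≤ k. -/
/-!
Words in `S` are the edges of the de Bruijn graph on words of length `n`, the edge `w` running
from its first `n` letters to its last `n` letters; a universal cycle is an Eulerian circuit of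
this graph. Membership in `S` only depends on the multiset of letters, so `S` is closed under
rotation, and rotating by one place matches the edges leaving a vertex with those entering it:
the graph is balanced. Changing a single letter of `w` is realised by a walk of `n + 1` steps
through rotations of `w` and of the changed word, and a path ending within distance `k ≥ 3` of
the origin can be changed letter by letter, staying within distance `k`, into the alternating
path `e₁, -e₁, e₁, …`: the graph is connected. An Eulerian circuit is then obtained from a
successor permutation of the edges, merging two of its cycles by a transposition whenever the
cycle through a fixed edge misses some edge.
-/

/- The finite set of words of length `k` over a finite alphabet `A`
satisfying a predicate `P`. -/
open Classical in
noncomputable def wordsOf {A : Type*} [Fintype A] {k : ℕ} (P : (Fin k → A) → Prop) :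
    Finset (Fin k → A) :=
  Finset.univ.filter P

/-- A nonempty finite set `S` of words of length `k` over `A` admits a universal cycle:
a function `c : ZMod S.card → A` such that `i ↦ (fun j => c (i + j))` is a bijection
from `ZMod S.card` onto `S`. -/
def HasUCycle {A : Type*} {k : ℕ} (S : Finset (Fin k → A)) : Prop :=
  ∃ c : ZMod S.card → A,
    Set.BijOn (fun i : ZMod S.card => fun j : Fin k => c (i + (j.val : ZMod S.card)))
      Set.univ ↑S

/-- The six unit step vectors `±e₁, ±e₂, ±e₃` in `ℤ³` (encoded as `ℤ × ℤ × ℤ`). -/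
def stepSet3 : Finset (ℤ × ℤ × ℤ) :=
  {(1, 0, 0), (-1, 0, 0), (0, 1, 0), (0, -1, 0), (0, 0, 1), (0, 0, -1)}

/-- The ℓ¹ norm on `ℤ³`. -/
def l1 (v : ℤ × ℤ × ℤ) : ℤ := |v.1| + |v.2.1| + |v.2.2|

open Equiv Function Relation

theorem hammingDist_update_lt {ι : Type*} [Fintype ι] [DecidableEq ι] {β : ι → Type*}
    [∀ i, DecidableEq (β i)] {x y : ∀ i, β i} {i : ι} (hi : x i ≠ y i) :
    hammingDist (update x i (y i)) y < hammingDist x y := by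
  refine Finset.card_lt_card
    (Finset.ssubset_iff_of_subset (fun j => ?_) |>.2 ⟨i, by simpa, by simp⟩)
  by_cases hj : j = i <;> simp [hj]

theorem sum_update_eq_sum_add_sub {ι M : Type*} [Fintype ι] [DecidableEq ι] [AddCommGroup M]
    (f : ι → M) (i : ι) (b : M) : ∑ j, update f i b j = ∑ j, f j + (b - f i) := by
  rw [Finset.sum_update_of_mem (Finset.mem_univ i),
    Finset.sum_eq_add_sum_sdiff_singleton_of_mem (Finset.mem_univ i) f]
  abel

namespace Equiv.Perm

section Merge

variable {α : Type*} [DecidableEq α] [Finite α] {σ : Perm α} {a b : α}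

/-- `σ * swap a b` agrees with `σ` off `{a, b}`, and `σ` leads from `x` back to `a`
without meeting `b`. -/
theorem SameCycle.mul_swap (hab : ¬σ.SameCycle a b) {x : α} (hx : σ.SameCycle x a) :
    (σ * swap a b).SameCycle x a := by
  obtain ⟨k, hk⟩ := hx.exists_nat_pow_eq
  induction k generalizing x with
  | zero => simp_all [SameCycle.refl]
  | succ k ih =>
    by_cases hxa : x = a
    · exact hxa ▸ SameCycle.refl _ _
    have hxb : x ≠ b := fun h => hab (h ▸ hx).symm
    have hstep : (σ * swap a b) x = σ x := by simp [swap_apply_of_ne_of_ne hxa hxb]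
    refine (sameCycle_apply_right.2 (SameCycle.refl _ x)).trans (hstep ▸ ?_)
    exact ih (sameCycle_apply_left.2 hx) (by rwa [pow_succ, mul_apply] at hk)

theorem sameCycle_mul_swap (hab : ¬σ.SameCycle a b) : (σ * swap a b).SameCycle a b := by
  have hb : (σ * swap b a).SameCycle (σ b) b :=
    SameCycle.mul_swap (mt SameCycle.symm hab) (sameCycle_apply_left.2 (SameCycle.refl _ _))
  rw [swap_comm] at hb
  exact (sameCycle_apply_right.2 (SameCycle.refl _ a)).trans (by simpa using hb)

end Merge

theorem exists_zmod_equiv_of_forall_sameCycle {α : Type*} [Finite α] {σ : Perm α} {x : α}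
    (h : ∀ y, σ.SameCycle x y) : ∃ F : ZMod (Nat.card α) ≃ α, ∀ i, F (i + 1) = σ (F i) := by
  classical
  have := Fintype.ofFinite α
  let O := MulAction.orbit (Subgroup.zpowers σ) x
  have hO : ∀ y, y ∈ O := fun y => by
    obtain ⟨k, rfl⟩ := h y
    exact ⟨⟨σ ^ k, k, rfl⟩, rfl⟩
  have hp : minimalPeriod (σ • ·) x = Nat.card α := by
    rw [MulAction.minimalPeriod_eq_card, Nat.card_eq_fintype_card]
    exact Fintype.card_congr (Equiv.subtypeUnivEquiv hO)
  rw [← hp]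
  refine ⟨(MulAction.orbitZPowersEquiv σ x).symm.trans (Equiv.subtypeUnivEquiv hO), fun i => ?_⟩
  rw [add_comm, ← ZMod.intCast_zmod_cast i, ← Int.cast_one, ← Int.cast_add]
  simp only [Equiv.trans_apply, Equiv.subtypeUnivEquiv_apply,
    MulAction.orbitZPowersEquiv_symm_apply', zpow_one_add, mul_smul]
  rfl

end Equiv.Perm

theorem exists_perm_forall_sameCycle {E V : Type*} [DecidableEq E] [Finite E] {s t : E → V}
    (hbal : ∀ v, Nat.card {e // t e = v} = Nat.card {e // s e = v}) (e₀ : E)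
    (hconn : ∀ e, ReflTransGen (fun x y => t x = s y) e e₀) :
    ∃ σ : Perm E, (∀ e, s (σ e) = t e) ∧ ∀ e, σ.SameCycle e₀ e := by
  let P : Set (Perm E) := {σ | ∀ e, s (σ e) = t e}
  have hP : P.Nonempty :=
    ⟨ofFiberEquiv fun v => (Finite.card_eq.1 (hbal v)).some, ofFiberEquiv_map _⟩
  obtain ⟨σ, hσ, hmax⟩ :=
    Set.exists_max_image P (fun σ => {e | σ.SameCycle e₀ e}.ncard) P.toFinite hP
  have hσ : ∀ e, s (σ e) = t e := hσ
  refine ⟨σ, hσ, fun e => ?_⟩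
  -- Otherwise `x` and the predecessor `a` of `y` enter the same vertex, and exchanging their
  -- successors merges the cycle of `x` into that of `e₀`.
  have hclosed : ∀ x y, t x = s y → σ.SameCycle e₀ y → σ.SameCycle e₀ x := by
    intro x y hxy hy
    by_contra hx
    set a := σ.symm y
    have ha : σ.SameCycle e₀ a := Perm.sameCycle_symm_apply_right.2 hy
    have hta : t a = t x := by rw [← hσ a, apply_symm_apply, hxy]
    have hσ' : σ * swap a x ∈ P := fun e => by
      rcases eq_or_ne e a with rfl | hea
      · simp [hσ, hta]
      rcases eq_or_ne e x with rfl | hex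
      · simp [hσ, hta]
      · simp [hσ, swap_apply_of_ne_of_ne hea hex]
    have hax : ¬σ.SameCycle a x := fun h => hx (ha.trans h)
    have hsub : {e | σ.SameCycle e₀ e} ⊂ {e | (σ * swap a x).SameCycle e₀ e} := by
      refine Set.ssubset_iff_of_subset (fun e he => ?_) |>.2 ⟨x, ?_, hx⟩
      · exact (ha.mul_swap hax).trans ((he.symm.trans ha).mul_swap hax).symm
      · exact (ha.mul_swap hax).trans (Perm.sameCycle_mul_swap hax)
    exact (Set.ncard_lt_ncard hsub).not_ge (hmax _ hσ')
  exact ReflTransGen.head_induction_on (hconn e) (Perm.SameCycle.refl σ e₀)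
    fun hxy _ hy => hclosed _ _ hxy hy

section Words

variable {A : Type*} {n : ℕ} {S : Finset (Fin (n + 1) → A)}

theorem hasUCycle_of_zmod_equiv (F : ZMod (Nat.card S) ≃ S)
    (hF : ∀ i, Fin.tail (F i : Fin (n + 1) → A) = Fin.init (F (i + 1) : Fin (n + 1) → A)) :
    HasUCycle S := by
  unfold HasUCycle
  rw [← Nat.card_eq_finsetCard]
  have hwindow : ∀ j (hj : j < n + 1) i,
      (F (i + j) : Fin (n + 1) → A) 0 = (F i : Fin (n + 1) → A) ⟨j, hj⟩ := by
    intro j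
    induction j with
    | zero => simp
    | succ j ih =>
      intro hj i
      rw [Nat.cast_succ, add_comm (j : ZMod (Nat.card S)), ← add_assoc, ih (by omega)]
      exact (congrFun (hF i) ⟨j, by omega⟩).symm
  refine ⟨fun i => (F i : Fin (n + 1) → A) 0, ?_⟩
  convert_to Set.BijOn (fun i => (F i : Fin (n + 1) → A)) Set.univ S using 1
  · exact funext fun i => funext fun j => hwindow j j.isLt i
  exact ⟨fun i _ => (F i).2, fun i _ i' _ h => F.injective (Subtype.ext h),
    fun w hw => ⟨F.symm ⟨w, hw⟩, trivial, by simp⟩⟩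

variable (hS : ∀ w ∈ S, ∀ t : Fin (n + 1), (fun j => w (j + t)) ∈ S)
include hS

theorem card_tail_eq_card_init (v : Fin n → A) :
    Nat.card {w : S // Fin.tail (w : Fin (n + 1) → A) = v} =
      Nat.card {w : S // Fin.init (w : Fin (n + 1) → A) = v} := by
  have hinit : ∀ w : Fin (n + 1) → A, Fin.init (fun j => w (j + 1)) = Fin.tail w :=
    fun w => funext fun j => by simp [Fin.init, Fin.tail, Fin.coeSucc_eq_succ]
  exact Nat.card_congr
    { toFun := fun w => ⟨⟨fun j => w.1.1 (j + 1), hS _ w.1.2 1⟩, (hinit _).trans w.2⟩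
      invFun := fun w => ⟨⟨fun j => w.1.1 (j + -1), hS _ w.1.2 (-1)⟩, by
        rw [← hinit]; simpa using w.2⟩
      left_inv := fun w => by simp
      right_inv := fun w => by simp }

open Fin.NatCast Fin.CommRing in
theorem reflTransGen_update {w : Fin (n + 1) → A} (hw : w ∈ S) {i : Fin (n + 1)} {a : A}
    (hu : update w i a ∈ S) :
    ReflTransGen (fun x y : S => Fin.tail (x : Fin (n + 1) → A) = Fin.init (y : Fin (n + 1) → A))
      ⟨w, hw⟩ ⟨update w i a, hu⟩ := by
  -- The `t`-th word of the walk is `w` (for `t ≤ i`) or `update w i a` (for `t > i`),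
  -- rotated by `t` places.
  let W : ℕ → Fin (n + 1) → A := fun t => if t ≤ i.val then w else update w i a
  have hW : ∀ t, W t ∈ S := fun t => by dsimp only [W]; split_ifs <;> assumption
  have hagree : ∀ (t : ℕ) (p : Fin (n + 1)), p ≠ (t : Fin (n + 1)) → W t p = W (t + 1) p := by
    intro t p hp
    dsimp only [W]
    split_ifs with h₁ h₂ h₂ <;> try rfl
    · obtain rfl : t = i.val := by omega
      rw [update_of_ne (by simpa using hp)]
    · omega
  let x : ℕ → S := fun t => ⟨fun j => W t (j + (t : Fin (n + 1))), hS _ (hW t) (t : Fin (n + 1))⟩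
  have hwalk : ∀ t ≤ n + 1, ReflTransGen
      (fun x y : S => Fin.tail (x : Fin (n + 1) → A) = Fin.init (y : Fin (n + 1) → A))
      ⟨w, hw⟩ (x t) := by
    intro t
    induction t with
    | zero => intro _; convert ReflTransGen.refl; simp [W]
    | succ t ih =>
      intro ht
      refine (ih (by omega)).tail (funext fun j => ?_)
      have hp : j.succ + (t : Fin (n + 1)) = j.castSucc + ((t + 1 : ℕ) : Fin (n + 1)) := by
        rw [← Fin.coeSucc_eq_succ]; push_cast; ring
      simp only [x, Fin.tail, Fin.init, ← hp]
      exact hagree t _ (by simp)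
  convert hwalk (n + 1) le_rfl
  simp [W, if_neg (Nat.not_lt.2 i.is_le)]

theorem reflTransGen_of_exists_update {w₀ : Fin (n + 1) → A} (hw₀ : w₀ ∈ S)
    (hfix : ∀ w ∈ S, w ≠ w₀ → ∃ i, w i ≠ w₀ i ∧ update w i (w₀ i) ∈ S) (w : S) :
    ReflTransGen (fun x y : S => Fin.tail (x : Fin (n + 1) → A) = Fin.init (y : Fin (n + 1) → A))
      w ⟨w₀, hw₀⟩ := by
  classical
  obtain ⟨w, hw⟩ := w
  induction hd : hammingDist w w₀ using Nat.strong_induction_on generalizing w with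
  | _ d ih =>
    by_cases hne : w = w₀
    · subst hne; rfl
    obtain ⟨i, hi, hu⟩ := hfix w hw hne
    exact (reflTransGen_update hS hw hu).trans (ih _ (hd ▸ hammingDist_update_lt hi) _ hu rfl)

theorem hasUCycle_of_exists_update {w₀ : Fin (n + 1) → A} (hw₀ : w₀ ∈ S)
    (hfix : ∀ w ∈ S, w ≠ w₀ → ∃ i, w i ≠ w₀ i ∧ update w i (w₀ i) ∈ S) : HasUCycle S := by
  classical
  obtain ⟨σ, hσ, hcycle⟩ := exists_perm_forall_sameCycle
    (s := fun w : S => Fin.init (w : Fin (n + 1) → A))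
    (t := fun w : S => Fin.tail (w : Fin (n + 1) → A))
    (card_tail_eq_card_init hS) ⟨w₀, hw₀⟩ (reflTransGen_of_exists_update hS hw₀ hfix)
  obtain ⟨F, hF⟩ := σ.exists_zmod_equiv_of_forall_sameCycle hcycle
  exact hasUCycle_of_zmod_equiv F fun i => by rw [hF, hσ]

end Words

def signPairing (s : ℤ × ℤ × ℤ) : ℤ × ℤ × ℤ →+ ℤ where
  toFun v := s.1.sign * v.1 + s.2.1.sign * v.2.1 + s.2.2.sign * v.2.2
  map_zero' := by simp
  map_add' u v := by simp only [Prod.fst_add, Prod.snd_add]; ring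

theorem signPairing_apply (s v : ℤ × ℤ × ℤ) :
    signPairing s v = s.1.sign * v.1 + s.2.1.sign * v.2.1 + s.2.2.sign * v.2.2 := rfl

theorem signPairing_self (s : ℤ × ℤ × ℤ) : signPairing s s = l1 s := by
  simp only [signPairing_apply, Int.sign_mul_self_eq_abs, l1]

theorem signPairing_le_l1 (s v : ℤ × ℤ × ℤ) : signPairing s v ≤ l1 v := by
  obtain ⟨a, b, c⟩ := s
  obtain ⟨d, e, f⟩ := v
  simp only [signPairing_apply, l1, Int.abs_eq_natAbs]
  rcases Int.sign_trichotomy a with ha | ha | ha <;>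
    rcases Int.sign_trichotomy b with hb | hb | hb <;>
    rcases Int.sign_trichotomy c with hc | hc | hc <;> simp only [ha, hb, hc] <;> omega

theorem l1_add_le_of_signPairing_neg {s v : ℤ × ℤ × ℤ} (hv : l1 v ≤ 2)
    (h : signPairing s v < 0) : l1 (s + v) ≤ l1 s := by
  obtain ⟨a, b, c⟩ := s
  obtain ⟨d, e, f⟩ := v
  simp only [signPairing_apply, l1, Int.abs_eq_natAbs, Prod.mk_add_mk] at *
  rcases lt_trichotomy a 0 with ha | rfl | ha <;> rcases lt_trichotomy b 0 with hb | rfl | hb <;>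
    rcases lt_trichotomy c 0 with hc | rfl | hc <;>
    simp only [Int.sign_eq_neg_one_of_neg, Int.sign_eq_one_of_pos, Int.sign_zero, *] at h <;> omega

theorem l1_add_le (u v : ℤ × ℤ × ℤ) : l1 (u + v) ≤ l1 u + l1 v := by
  simp only [l1, Prod.fst_add, Prod.snd_add]
  linarith [abs_add_le u.1 v.1, abs_add_le u.2.1 v.2.1, abs_add_le u.2.2 v.2.2]

theorem l1_sub_le_two {x y : ℤ × ℤ × ℤ} (hx : x ∈ stepSet3) (hy : y ∈ stepSet3) :
    l1 (y - x) ≤ 2 := by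
  simp only [stepSet3, Finset.mem_insert, Finset.mem_singleton] at hx hy
  rcases hx with rfl | rfl | rfl | rfl | rfl | rfl <;>
    rcases hy with rfl | rfl | rfl | rfl | rfl | rfl <;> decide

theorem exists_l1_add_le {ι : Type*} [Fintype ι] {k : ℤ} (hk : 3 ≤ k) {s : ℤ × ℤ × ℤ}
    (hs : l1 s ≤ k) {δ : ι → ℤ × ℤ × ℤ} (hδ : ∀ i, l1 (δ i) ≤ 2)
    (hend : l1 (s + ∑ i, δ i) ≤ 1) (hne : δ ≠ 0) : ∃ i, δ i ≠ 0 ∧ l1 (s + δ i) ≤ k := by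
  by_cases hfar : l1 s + 2 ≤ k
  · obtain ⟨i, hi⟩ := Function.ne_iff.1 hne
    exact ⟨i, hi, (l1_add_le s (δ i)).trans (by linarith [hδ i])⟩
  -- Now `l1 s ≥ 2`, so `signPairing s` is negative on `∑ δ`, hence on some `δ i`.
  have hsum : ∑ i, signPairing s (δ i) < ∑ i : ι, 0 := by
    have := signPairing_le_l1 s (s + ∑ i, δ i)
    rw [map_add, signPairing_self, map_sum] at this
    rw [Finset.sum_const_zero]
    linarith
  obtain ⟨i, -, hi⟩ := Finset.exists_lt_of_sum_lt hsum
  exact ⟨i, fun h0 => by simp [h0] at hi, (l1_add_le_of_signPairing_neg (hδ i) hi).trans hs⟩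

theorem exists_update_l1_sum_le {ι : Type*} [Fintype ι] [DecidableEq ι] {k : ℤ} (hk : 3 ≤ k)
    {w w₀ : ι → stepSet3} (hw : l1 (∑ j, (w j : ℤ × ℤ × ℤ)) ≤ k)
    (hw₀ : l1 (∑ j, (w₀ j : ℤ × ℤ × ℤ)) ≤ 1) (hne : w ≠ w₀) :
    ∃ i, w i ≠ w₀ i ∧ l1 (∑ j, (update w i (w₀ i) j : ℤ × ℤ × ℤ)) ≤ k := by
  let δ : ι → ℤ × ℤ × ℤ := fun i => (w₀ i : ℤ × ℤ × ℤ) - w i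
  have hδ : ∀ i, δ i ≠ 0 ↔ w i ≠ w₀ i := fun i => by
    rw [Ne, sub_eq_zero, Subtype.coe_inj, eq_comm]
  obtain ⟨i₀, hi₀⟩ := Function.ne_iff.1 hne
  obtain ⟨i, hi, hle⟩ := exists_l1_add_le hk hw (δ := δ)
    (fun i => l1_sub_le_two (w i).2 (w₀ i).2) (by simpa [δ, Finset.sum_sub_distrib] using hw₀)
    (Function.ne_iff.2 ⟨i₀, (hδ i₀).2 hi₀⟩)
  refine ⟨i, (hδ i).1 hi, ?_⟩
  rwa [← comp_def, comp_update, sum_update_eq_sum_add_sub]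

def alternatingPath (m : ℕ) : Fin m → stepSet3 :=
  fun j => if Even j.val then ⟨(1, 0, 0), by decide⟩ else ⟨(-1, 0, 0), by decide⟩

theorem l1_sum_alternatingPath_le_one (m : ℕ) :
    l1 (∑ j, (alternatingPath m j : ℤ × ℤ × ℤ)) ≤ 1 := by
  have hsum : ∑ j, (alternatingPath m j : ℤ × ℤ × ℤ) = if Even m then 0 else (1, 0, 0) := by
    simp only [alternatingPath]
    rw [Fin.sum_univ_eq_sum_range (fun p => ((if Even p then ⟨(1, 0, 0), by decide⟩
      else ⟨(-1, 0, 0), by decide⟩ : stepSet3) : ℤ × ℤ × ℤ))]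
    induction m with
    | zero => simp
    | succ m ih => by_cases h : Even m <;> simp [Finset.sum_range_succ, ih, h, Nat.even_add_one]
  rw [hsum]
  split_ifs <;> decide

/-- For `n ≥ k + 1 ≥ 4` there is a universal cycle for the set of three-dimensional
lattice paths of length `n` (words over the six unit step vectors) whose endpoint
lies within ℓ¹-distance `k` of the origin. -/
theorem ucycle_lattice_paths_3d (n k : ℕ) (hk : 4 ≤ k + 1) (hn : k + 1 ≤ n) :
    HasUCycle (wordsOf (fun w : Fin n → ↥stepSet3 =>
      l1 (∑ i, (w i : ℤ × ℤ × ℤ)) ≤ (k : ℤ))) := by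
  obtain ⟨m, rfl⟩ : ∃ m, n = m + 1 := ⟨n - 1, by omega⟩
  have hmem : ∀ w, w ∈ wordsOf (fun w : Fin (m + 1) → ↥stepSet3 =>
      l1 (∑ i, (w i : ℤ × ℤ × ℤ)) ≤ (k : ℤ)) ↔ l1 (∑ i, (w i : ℤ × ℤ × ℤ)) ≤ (k : ℤ) := by
    simp [wordsOf]
  have hw₀ := l1_sum_alternatingPath_le_one (m + 1)
  refine hasUCycle_of_exists_update (fun w hw t => ?_) (w₀ := alternatingPath (m + 1))
    ((hmem _).2 (by omega)) fun w hw hne => ?_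
  · rw [hmem] at hw ⊢
    rw [← Equiv.sum_comp (Equiv.addRight t)] at hw
    exact hw
  · obtain ⟨i, hi, hle⟩ := exists_update_l1_sum_le (by omega) ((hmem w).1 hw) hw₀ hne
    exact ⟨i, hi, (hmem _).2 hle⟩
end

section
/- For every integer n ≥ 3, there exists a universal cycle for the set of almost onto words of length n over Fin n, i.e., words w : Fin n → Fin n whose image has cardinality exactly n − 1 (exactly one letter of the alphabet is missing). -/
/-!
The almost onto words are the edges of a directed graph on words of length `n - 1`, a word `w`
joining `Fin.init w` to `Fin.tail w`, and reading off first letters along an Eulerian circuit of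
this graph gives a U-cycle. As the edge set is closed under cyclic shifts, the graph is balanced
(shifting a word by one exchanges the edges leaving and entering a vertex) and all cyclic windows
of an edge are mutually reachable. Every almost onto word has an injective window (omit an
occurrence of its repeated letter), so it remains to connect the injective vertices
`π ∘ Fin.castSucc`, for permutations `π`. Since the graph is invariant under relabelling
letters, the `π` reachable from `Fin.castSucc` form a subgroup, and two explicit edges put the
`n`-cycle and a transposition into it. Euler's theorem is proved by the longest-trail argument:
balance closes a longest trail, and connectivity shows that it uses every edge.
-/

open Finset Function

section Euler

variable {V E : Type*} (src tgt : E → V)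

def Reachable : V → V → Prop :=
  Relation.ReflTransGen fun v v' => ∃ e, src e = v ∧ tgt e = v'

def IsTrail {k : ℕ} (c : Fin (k + 1) → E) : Prop :=
  Injective c ∧ ∀ i : Fin k, tgt (c i.castSucc) = src (c i.succ)

def IsCircuit {k : ℕ} (c : Fin (k + 1) → E) : Prop :=
  Injective c ∧ ∀ i, tgt (c i) = src (c (i + 1))

variable {src tgt} {k : ℕ} {c : Fin (k + 1) → E}

lemma IsCircuit.isTrail (h : IsCircuit src tgt c) : IsTrail src tgt c :=
  ⟨h.1, fun i => by rw [← Fin.coeSucc_eq_succ]; exact h.2 i.castSucc⟩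

lemma IsTrail.isCircuit (h : IsTrail src tgt c) (hclosed : tgt (c (Fin.last k)) = src (c 0)) :
    IsCircuit src tgt c := by
  refine ⟨h.1, fun i => ?_⟩
  induction i using Fin.lastCases with
  | last => rwa [Fin.last_add_one]
  | cast i => rw [Fin.coeSucc_eq_succ]; exact h.2 i

lemma IsTrail.snoc (h : IsTrail src tgt c) {e : E} (he : e ∉ Set.range c)
    (hlink : tgt (c (Fin.last k)) = src e) :
    IsTrail src tgt (Fin.snoc c e : Fin (k + 2) → E) := by
  refine ⟨Fin.snoc_injective_iff.2 ⟨h.1, he⟩, fun i => ?_⟩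
  induction i using Fin.lastCases with
  | last => rw [Fin.snoc_castSucc, Fin.succ_last, Fin.snoc_last]; exact hlink
  | cast i => rw [Fin.succ_castSucc, Fin.snoc_castSucc, Fin.snoc_castSucc]; exact h.2 i

lemma IsCircuit.comp_add_right (h : IsCircuit src tgt c) (s : Fin (k + 1)) :
    IsCircuit src tgt fun i => c (i + s) :=
  ⟨h.1.comp (add_left_injective s), fun i => by
    simp only [add_right_comm i 1 s]
    exact h.2 (i + s)⟩

lemma IsTrail.card_src_add_eq [DecidableEq V] (h : IsTrail src tgt c) (v : V) :
    #{i | src (c i) = v} + (if tgt (c (Fin.last k)) = v then 1 else 0) =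
      #{i | tgt (c i) = v} + (if src (c 0) = v then 1 else 0) := by
  simp only [card_filter, Fin.sum_univ_succ (f := fun i => if src (c i) = v then 1 else 0),
    Fin.sum_univ_castSucc (f := fun i => if tgt (c i) = v then 1 else 0), h.2]
  ring

lemma IsTrail.exists_src_eq_tgt_last [Fintype E] [DecidableEq V]
    (hbal : ∀ v, #{e | src e = v} = #{e | tgt e = v}) (h : IsTrail src tgt c)
    (hopen : tgt (c (Fin.last k)) ≠ src (c 0)) :
    ∃ e ∉ Set.range c, src e = tgt (c (Fin.last k)) := by
  set v := tgt (c (Fin.last k))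
  have hcount := h.card_src_add_eq v
  rw [if_pos rfl, if_neg (Ne.symm hopen)] at hcount
  by_contra! hall
  have hsrc : #{e | src e = v} ≤ #{i | src (c i) = v} := by
    refine card_le_card_of_surjOn c fun e he => ?_
    have he : src e = v := by simpa using he
    obtain ⟨i, rfl⟩ : e ∈ Set.range c := not_not.1 fun hi => hall e hi he
    exact ⟨i, by simpa using he, rfl⟩
  have htgt : #{i | tgt (c i) = v} ≤ #{e | tgt e = v} :=
    card_le_card_of_injOn c (fun i hi => by simpa using hi) h.1.injOn
  have := hbal v
  omega

lemma Reachable.exists_notMem_src_eq_tgt {T : Set E} {g : E} (hg : g ∉ T) {v : V}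
    (hr : Reachable src tgt v (src g)) (hv : ∃ e ∈ T, tgt e = v) :
    ∃ h ∉ T, ∃ e ∈ T, tgt e = src h := by
  induction hr using Relation.ReflTransGen.head_induction_on with
  | refl => exact ⟨g, hg, hv⟩
  | head hstep _ ih =>
    obtain ⟨e', rfl, rfl⟩ := hstep
    by_cases he' : e' ∈ T
    · exact ih ⟨e', he', rfl⟩
    · exact ⟨e', he', hv⟩

lemma IsTrail.exists_isTrail_succ [Fintype E] [DecidableEq V]
    (hbal : ∀ v, #{e | src e = v} = #{e | tgt e = v})
    (hconn : ∀ e f, Reachable src tgt (tgt e) (src f)) (h : IsTrail src tgt c)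
    (hnot : ¬ (IsCircuit src tgt c ∧ Surjective c)) :
    ∃ c' : Fin (k + 2) → E, IsTrail src tgt c' := by
  by_cases hclosed : tgt (c (Fin.last k)) = src (c 0)
  · have hcirc := h.isCircuit hclosed
    obtain ⟨g, hg⟩ : ∃ g, g ∉ Set.range c :=
      not_forall.1 fun hsurj => hnot ⟨hcirc, hsurj⟩
    obtain ⟨e, he, -, ⟨a, rfl⟩, hlink⟩ :=
      (hconn (c 0) g).exists_notMem_src_eq_tgt hg ⟨c 0, ⟨0, rfl⟩, rfl⟩
    -- rotate the circuit so that it ends with `c a`, then append `e`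
    have hlast : Fin.last k + (a + 1) = a := by
      rw [add_comm a, ← add_assoc, Fin.last_add_one, zero_add]
    refine ⟨_, (hcirc.comp_add_right (a + 1)).isTrail.snoc (e := e) ?_ ?_⟩
    · rintro ⟨i, rfl⟩
      exact he ⟨_, rfl⟩
    · simpa [hlast] using hlink
  · obtain ⟨e, he, hlink⟩ := h.exists_src_eq_tgt_last hbal hclosed
    exact ⟨_, h.snoc he hlink.symm⟩

theorem exists_isCircuit_surjective [Fintype E] [Nonempty E] [DecidableEq V]
    (hbal : ∀ v, #{e | src e = v} = #{e | tgt e = v})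
    (hconn : ∀ e f, Reachable src tgt (tgt e) (src f)) :
    ∃ (k : ℕ) (c : Fin (k + 1) → E), IsCircuit src tgt c ∧ Surjective c := by
  by_contra! hno
  have htrail : ∀ k, ∃ c : Fin (k + 1) → E, IsTrail src tgt c := by
    intro k
    induction k with
    | zero =>
      obtain ⟨e⟩ := ‹Nonempty E›
      exact ⟨fun _ => e, fun i j _ => Subsingleton.elim (α := Fin 1) i j, fun i => i.elim0⟩
    | succ k ih =>
      obtain ⟨c, hc⟩ := ih
      exact hc.exists_isTrail_succ hbal hconn fun h => hno k c h.1 h.2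
  obtain ⟨c, hc⟩ := htrail (Fintype.card E)
  simpa using Fintype.card_le_of_injective c hc.1

end Euler

section WordGraph

variable {α : Type*} {m : ℕ}

theorem hasUCycle_of_isCircuit {S : Finset (Fin (m + 1) → α)} {k : ℕ} {c : Fin (k + 1) → S}
    (hc : IsCircuit (fun w : S => Fin.init w.1) (fun w : S => Fin.tail w.1) c)
    (hsurj : Surjective c) : HasUCycle S := by
  have hcard : S.card = k + 1 := by
    rw [← Fintype.card_coe, ← Fintype.card_fin (k + 1)]
    exact (Fintype.card_of_bijective ⟨hc.1, hsurj⟩).symm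
  unfold HasUCycle
  rw [hcard]
  -- `ZMod (k + 1)` is `Fin (k + 1)` by definition
  obtain ⟨d, hd, hstep⟩ : ∃ d : ZMod (k + 1) → S,
      Bijective d ∧ ∀ i, Fin.tail (d i).1 = Fin.init (d (i + 1)).1 :=
    ⟨c, ⟨hc.1, hsurj⟩, hc.2⟩
  have hletter : ∀ (j : Fin (m + 1)) (i : ZMod (k + 1)), (d i).1 j = (d (i + j.val)).1 0 := by
    intro j
    induction j using Fin.induction with
    | zero => simp
    | succ j ih =>
      intro i
      calc (d i).1 j.succ = (d (i + 1)).1 j.castSucc := congrFun (hstep i) j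
        _ = (d (i + j.succ.val)).1 0 := by
          rw [ih, Fin.val_succ, Fin.val_castSucc, Nat.cast_succ, add_assoc, add_comm 1]
  have hwindow : (fun i : ZMod (k + 1) => fun j : Fin (m + 1) =>
      (d (i + (j.val : ZMod (k + 1)))).1 0) = fun i => (d i).1 := by
    funext i j
    exact (hletter j i).symm
  refine ⟨fun i => (d i).1 0, ?_⟩
  rw [hwindow]
  exact ⟨fun i _ => (d i).2, fun i _ j _ h => hd.1 (Subtype.ext h), fun w hw =>
    let ⟨i, hi⟩ := hd.2 ⟨w, hw⟩; ⟨i, trivial, congrArg Subtype.val hi⟩⟩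

abbrev WordReachable (S : Finset (Fin (m + 1) → α)) :
    (Fin m → α) → (Fin m → α) → Prop :=
  Reachable (fun w : S => Fin.init w.1) (fun w : S => Fin.tail w.1)

variable {S : Finset (Fin (m + 1) → α)}

lemma wordReachable_init_tail {w : Fin (m + 1) → α} (hw : w ∈ S) :
    WordReachable S (Fin.init w) (Fin.tail w) :=
  .single ⟨⟨w, hw⟩, rfl, rfl⟩

lemma WordReachable.comp {f : α → α} (hf : ∀ w ∈ S, f ∘ w ∈ S) {v v' : Fin m → α}
    (h : WordReachable S v v') : WordReachable S (f ∘ v) (f ∘ v') :=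
  h.lift _ fun _ _ ⟨w, hv, hv'⟩ =>
    ⟨⟨f ∘ w.1, hf w.1 w.2⟩, by rw [← hv]; rfl, by rw [← hv']; rfl⟩

lemma Fin.succ_add_last (i : Fin m) : i.succ + Fin.last m = i.castSucc := by
  rw [← Fin.coeSucc_eq_succ, add_assoc, add_comm 1, Fin.last_add_one, add_zero]

section ShiftInvariant

variable (hS : ∀ w ∈ S, ∀ s, (fun i => w (i + s)) ∈ S)
include hS

lemma card_filter_init_eq_card_filter_tail [DecidableEq α] (v : Fin m → α) :
    #{w : S | Fin.init w.1 = v} = #{w : S | Fin.tail w.1 = v} := by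
  refine card_nbij' (fun w => ⟨fun i => w.1 (i + Fin.last m), hS w.1 w.2 _⟩)
    (fun w => ⟨fun i => w.1 (i + 1), hS w.1 w.2 _⟩) ?_ ?_ ?_ ?_
  · intro w hw
    simp only [coe_filter, mem_univ, true_and, Set.mem_ofPred_eq] at hw ⊢
    rw [← hw]
    exact funext fun i => congrArg w.1 (Fin.succ_add_last i)
  · intro w hw
    simp only [coe_filter, mem_univ, true_and, Set.mem_ofPred_eq] at hw ⊢
    rw [← hw]
    exact funext fun i => congrArg w.1 Fin.coeSucc_eq_succ
  · intro w _
    ext i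
    simp [add_assoc, add_comm 1 (Fin.last m), Fin.last_add_one]
  · intro w _
    ext i
    simp [add_assoc, Fin.last_add_one]

/-- `fun i => w (i.succ + s)` is the cyclic window of `w` that omits position `s`. -/
lemma wordReachable_tail_shift {w : Fin (m + 1) → α} (hw : w ∈ S) (s : Fin (m + 1)) :
    WordReachable S (Fin.tail w) fun i => w (i.succ + s) := by
  induction s using Fin.induction with
  | zero => simp only [add_zero]; exact .refl
  | succ s ih =>
    refine ih.tail ⟨⟨fun i => w (i + s.succ), hS w hw _⟩, ?_, rfl⟩
    funext i
    simp only [Fin.init, ← Fin.coeSucc_eq_succ]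
    congr 1
    abel

lemma WordReachable.symm {v v' : Fin m → α} (h : WordReachable S v v') :
    WordReachable S v' v := by
  induction h with
  | refl => exact .refl
  | tail _ hstep ih =>
    obtain ⟨⟨w, hw⟩, rfl, rfl⟩ := hstep
    refine .trans ?_ ih
    have h := wordReachable_tail_shift hS hw (Fin.last m)
    simp only [Fin.succ_add_last] at h
    exact h

end ShiftInvariant

end WordGraph

section AlmostOnto

variable {m : ℕ}

noncomputable def almostOntoWords (m : ℕ) : Finset (Fin (m + 1) → Fin (m + 1)) :=
  wordsOf fun w => (univ.image w).card = m

lemma mem_almostOntoWords {w : Fin (m + 1) → Fin (m + 1)} :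
    w ∈ almostOntoWords m ↔ (univ.image w).card = m := by
  simp [almostOntoWords, wordsOf]

lemma comp_perm_mem_almostOntoWords (σ : Equiv.Perm (Fin (m + 1))) :
    ∀ w ∈ almostOntoWords m, w ∘ σ ∈ almostOntoWords m := fun w hw => by
  rwa [mem_almostOntoWords, ← image_image, image_univ_of_surjective σ.surjective,
    ← mem_almostOntoWords]

lemma perm_comp_mem_almostOntoWords (σ : Equiv.Perm (Fin (m + 1))) :
    ∀ w ∈ almostOntoWords m, σ ∘ w ∈ almostOntoWords m := fun w hw => by
  rwa [mem_almostOntoWords, ← image_image, card_image_of_injective _ σ.injective,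
    ← mem_almostOntoWords]

lemma shift_mem_almostOntoWords :
    ∀ w ∈ almostOntoWords m, ∀ s, (fun i => w (i + s)) ∈ almostOntoWords m :=
  fun w hw s => comp_perm_mem_almostOntoWords (Equiv.addRight s) w hw

lemma exists_injective_tail_shift {w : Fin (m + 1) → Fin (m + 1)} (hw : w ∈ almostOntoWords m) :
    ∃ s, Injective fun i : Fin m => w (i.succ + s) := by
  obtain ⟨p, q, hpq, hne⟩ : ∃ p q, w p = w q ∧ p ≠ q := by
    by_contra! hinj
    have := card_image_of_injective univ fun p q h => hinj p q h
    rw [mem_almostOntoWords.1 hw] at this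
    simp at this
  have hshift : ∀ j ≠ p, ∃ i : Fin m, i.succ + p = j := fun j hj => by
    obtain ⟨i, hi⟩ := Fin.exists_succ_eq.2 (sub_ne_zero.2 hj)
    exact ⟨i, by rw [hi, sub_add_cancel]⟩
  have hsub : univ.image w ⊆ univ.image fun i : Fin m => w (i.succ + p) := by
    intro x hx
    obtain ⟨j, -, rfl⟩ := mem_image.1 hx
    rw [mem_image]
    by_cases hj : j = p
    · obtain ⟨i, hi⟩ := hshift q hne.symm
      exact ⟨i, mem_univ _, by rw [hi, hj, hpq]⟩
    · obtain ⟨i, hi⟩ := hshift j hj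
      exact ⟨i, mem_univ _, by rw [hi]⟩
  have hcard : (univ.image fun i : Fin m => w (i.succ + p)).card = (univ : Finset (Fin m)).card :=
    le_antisymm card_image_le (by simpa [mem_almostOntoWords.1 hw] using card_le_card hsub)
  exact ⟨p, by simpa using card_image_iff.1 hcard⟩

lemma exists_perm_comp_castSucc {u : Fin m → Fin (m + 1)} (hu : Injective u) :
    ∃ π : Equiv.Perm (Fin (m + 1)), π ∘ Fin.castSucc = u := by
  obtain ⟨x, hx⟩ : ∃ x, x ∉ Set.range u := by
    by_contra! h
    simpa using Fintype.card_le_of_surjective u h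
  have hinj : Injective (Fin.snoc u x : Fin (m + 1) → Fin (m + 1)) :=
    Fin.snoc_injective_iff.2 ⟨hu, hx⟩
  exact ⟨Equiv.ofBijective _ hinj.bijective_of_finite, funext fun i => by simp⟩

lemma snoc_castSucc_mem_almostOntoWords (a : Fin m) :
    (Fin.snoc Fin.castSucc a.castSucc : Fin (m + 1) → Fin (m + 1)) ∈ almostOntoWords m := by
  rw [mem_almostOntoWords]
  have himage : univ.image (Fin.snoc Fin.castSucc a.castSucc : Fin (m + 1) → Fin (m + 1)) =
      univ.image Fin.castSucc := by
    simp only [← coe_inj, coe_image, coe_univ, Set.image_univ, Fin.range_snoc]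
    exact Set.insert_eq_of_mem (Set.mem_range_self a)
  rw [himage, card_image_of_injective _ (Fin.castSucc_injective m), card_univ, Fintype.card_fin]

lemma tail_snoc_castSucc_castSucc (b : Fin (m + 2)) (j : Fin m) :
    Fin.tail (Fin.snoc Fin.castSucc b : Fin (m + 2) → Fin (m + 2)) j.castSucc =
      j.succ.castSucc := by
  rw [Fin.tail, Fin.succ_castSucc, Fin.snoc_castSucc]

lemma tail_snoc_castSucc_last (b : Fin (m + 2)) :
    Fin.tail (Fin.snoc Fin.castSucc b : Fin (m + 2) → Fin (m + 2)) (Fin.last m) = b := by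
  rw [Fin.tail, Fin.succ_last, Fin.snoc_last]

end AlmostOnto

section Connected

variable {k : ℕ}

local notation "S" => almostOntoWords (k + 2)

lemma wordReachable_swap :
    WordReachable S Fin.castSucc (Equiv.swap (Fin.last (k + 2)) 0 ∘ Fin.castSucc) := by
  set τ := Equiv.swap (Fin.last (k + 2)) 0
  -- `w = (0, 1, …, k + 1, k + 1)`: the letters of `Fin.tail w` are all fixed by `τ`
  set w : Fin (k + 3) → Fin (k + 3) := Fin.snoc Fin.castSucc (Fin.last (k + 1)).castSucc
  have hw : w ∈ S := snoc_castSucc_mem_almostOntoWords _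
  have hfix : τ ∘ Fin.tail w = Fin.tail w := by
    funext i
    refine Equiv.swap_apply_of_ne_of_ne ?_ ?_ <;> induction i using Fin.lastCases <;>
      simp only [w, tail_snoc_castSucc_castSucc, tail_snoc_castSucc_last, ne_eq, Fin.ext_iff,
        Fin.val_castSucc, Fin.val_succ, Fin.val_last, Fin.val_zero] <;> omega
  have h₁ : WordReachable S Fin.castSucc (Fin.tail w) := by
    simpa [w] using wordReachable_init_tail hw
  have h₂ := h₁.comp (perm_comp_mem_almostOntoWords τ)
  rw [hfix] at h₂
  exact h₁.trans (h₂.symm shift_mem_almostOntoWords)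

lemma wordReachable_finRotate :
    WordReachable S Fin.castSucc (finRotate (k + 3) ∘ Fin.castSucc) := by
  set τ := Equiv.swap (Fin.last (k + 2)) 0
  -- `τ ∘ w = (k + 2, 1, …, k + 1, k + 2)` joins `τ ∘ Fin.castSucc` to
  -- `finRotate (k + 3) ∘ Fin.castSucc`
  set w : Fin (k + 3) → Fin (k + 3) := Fin.snoc Fin.castSucc (0 : Fin (k + 2)).castSucc
  have hw : τ ∘ w ∈ S :=
    perm_comp_mem_almostOntoWords τ _ (snoc_castSucc_mem_almostOntoWords _)
  have hrot : τ ∘ Fin.tail w = finRotate (k + 3) ∘ Fin.castSucc := by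
    funext i
    induction i using Fin.lastCases with
    | last => simp [w, τ, tail_snoc_castSucc_last]
    | cast i =>
      simp only [Function.comp_apply, w, tail_snoc_castSucc_castSucc]
      rw [Equiv.swap_apply_of_ne_of_ne, finRotate_apply, Fin.coeSucc_eq_succ, Fin.succ_castSucc] <;>
        simp only [ne_eq, Fin.ext_iff, Fin.val_castSucc, Fin.val_succ, Fin.val_last,
          Fin.val_zero] <;> omega
  have h : WordReachable S (τ ∘ Fin.init w) (τ ∘ Fin.tail w) := wordReachable_init_tail hw
  rw [hrot, Fin.init_snoc] at h
  exact wordReachable_swap.trans h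

lemma wordReachable_perm (σ : Equiv.Perm (Fin (k + 3))) :
    WordReachable S Fin.castSucc (σ ∘ Fin.castSucc) := by
  have hgen := Equiv.Perm.closure_cycle_adjacent_swap isCycle_finRotate support_finRotate
    (Fin.last (k + 2))
  rw [finRotate_last] at hgen
  have hσ := hgen ▸ Subgroup.mem_top σ
  induction hσ using Subgroup.closure_induction with
  | mem τ hτ =>
    rcases hτ with rfl | rfl
    exacts [wordReachable_finRotate, wordReachable_swap]
  | one => exact .refl
  | mul σ τ _ _ hσ hτ =>
    have h := hτ.comp (perm_comp_mem_almostOntoWords σ)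
    rw [← Function.comp_assoc, ← Equiv.Perm.coe_mul] at h
    exact hσ.trans h
  | inv σ _ hσ =>
    have h := hσ.comp (perm_comp_mem_almostOntoWords σ⁻¹)
    rw [← Function.comp_assoc, ← Equiv.Perm.coe_mul, inv_mul_cancel, Equiv.Perm.coe_one,
      Function.id_comp] at h
    exact h.symm shift_mem_almostOntoWords

lemma wordReachable_of_injective {u u' : Fin (k + 2) → Fin (k + 3)} (hu : Injective u)
    (hu' : Injective u') : WordReachable S u u' := by
  obtain ⟨π, rfl⟩ := exists_perm_comp_castSucc hu
  obtain ⟨π', rfl⟩ := exists_perm_comp_castSucc hu'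
  have h := (wordReachable_perm (π⁻¹ * π')).comp (perm_comp_mem_almostOntoWords π)
  rwa [← Function.comp_assoc, ← Equiv.Perm.coe_mul, mul_inv_cancel_left] at h

lemma wordReachable_tail_init {e f : Fin (k + 3) → Fin (k + 3)} (he : e ∈ S) (hf : f ∈ S) :
    WordReachable S (Fin.tail e) (Fin.init f) := by
  obtain ⟨s, hs⟩ := exists_injective_tail_shift he
  obtain ⟨t, ht⟩ := exists_injective_tail_shift hf
  have hS := shift_mem_almostOntoWords (m := k + 2)
  exact (wordReachable_tail_shift hS he s).trans <| (wordReachable_of_injective hs ht).trans <|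
    ((wordReachable_tail_shift hS hf t).symm hS).trans ((wordReachable_init_tail hf).symm hS)

end Connected

/-- For `n ≥ 3`, a U-cycle of almost onto words of length `n` over `Fin n`
(words whose image has exactly `n - 1` elements, i.e. exactly one letter missing)
exists. -/
theorem ucycle_almost_onto_words (n : ℕ) (hn : 3 ≤ n) :
    HasUCycle (wordsOf (fun w : Fin n → Fin n =>
      (Finset.univ.image w).card = n - 1)) := by
  obtain ⟨k, rfl⟩ : ∃ k, n = k + 3 := ⟨n - 3, by omega⟩
  have : Nonempty (almostOntoWords (k + 2)) := ⟨⟨_, snoc_castSucc_mem_almostOntoWords 0⟩⟩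
  obtain ⟨_, c, hc, hsurj⟩ := exists_isCircuit_surjective (E := almostOntoWords (k + 2))
    (card_filter_init_eq_card_filter_tail shift_mem_almostOntoWords)
    fun e f => wordReachable_tail_init e.2 f.2
  exact hasUCycle_of_isCircuit hc hsurj
end

section
/- For every integer n ≥ 3, there exists a universal cycle for the set of non-bijective words of length n over Fin n, i.e., words w : Fin n → Fin n such that w is not a bijection of Fin n. -/
open Finset Relation Function

section Eulerian

variable {E V : Type*} (src dst : E → V) (S : Finset E)

def EdgeAdj (u v : V) : Prop := ∃ e ∈ S, src e = u ∧ dst e = v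

structure IsTrail_s14 (l : List E) : Prop where
  nodup : l.Nodup
  mem : ∀ e ∈ l, e ∈ S
  isChain : l.IsChain (fun x y => dst x = src y)

variable {src dst S}

theorem List.IsChain.src_cons_map_dst {l : List E} (hl : l.IsChain (fun x y => dst x = src y))
    (hne : l ≠ []) : src (l.head hne) :: l.map dst = l.map src ++ [dst (l.getLast hne)] := by
  induction l with
  | nil => exact absurd rfl hne
  | cons a t ih =>
    rcases t with _ | ⟨b, t⟩
    · rfl
    · rw [List.isChain_cons_cons] at hl
      have := ih hl.2 (List.cons_ne_nil b t)
      simp only [List.head_cons, List.map_cons, List.getLast_cons_cons, List.cons_append]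
        at this ⊢
      rw [hl.1, this]

theorem List.Nodup.card_filter_toFinset [DecidableEq E] [DecidableEq V] {l : List E}
    (hl : l.Nodup) (f : E → V) (v : V) : #{e ∈ l.toFinset | f e = v} = (l.map f).count v := by
  rw [List.count, List.countP_map, List.countP_eq_length_filter,
    ← List.toFinset_card_of_nodup (hl.filter _), List.toFinset_filter]
  simp

variable {l : List E}

theorem IsTrail_s14.concat (hl : IsTrail_s14 src dst S l) {f : E} (hfS : f ∈ S) (hfl : f ∉ l)
    (hlf : ∀ p ∈ l.getLast?, dst p = src f) : IsTrail_s14 src dst S (l ++ [f]) := by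
  refine ⟨hl.nodup.append (List.nodup_singleton f) (by simpa using hfl), fun e he => ?_,
    hl.isChain.append (List.isChain_singleton f) (by simpa using hlf)⟩
  rcases List.mem_append.1 he with he | he
  · exact hl.mem e he
  · rwa [List.mem_singleton.1 he]

theorem IsTrail_s14.exists_rotation_getLast?_eq (hl : IsTrail_s14 src dst S l)
    (hcl : Cycle.Chain (fun x y => dst x = src y) (l : Cycle E)) {p : E} (hp : p ∈ l) :
    ∃ l', IsTrail_s14 src dst S l' ∧ l'.Perm l ∧ l'.getLast? = some p := by
  obtain ⟨A, B, rfl⟩ := List.append_of_mem hp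
  have hrot : (A ++ p :: B : Cycle E) = (p :: (B ++ A) : List E) := by
    rw [Cycle.coe_eq_coe]
    exact List.isRotated_append
  rw [hrot, Cycle.chain_coe_cons] at hcl
  have hperm : (B ++ A ++ [p]).Perm (A ++ p :: B) :=
    (List.perm_append_singleton _ _).trans (List.perm_append_comm (l₁ := p :: B))
  refine ⟨B ++ A ++ [p], ⟨hperm.nodup_iff.2 hl.nodup, fun e he => hl.mem e (hperm.mem_iff.1 he),
    hcl.tail⟩, hperm, by simp⟩

theorem exists_edge_leaving (hconn : ∀ u v, ReflTransGen (EdgeAdj src dst S) u v)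
    {p e : E} (hp : p ∈ l) (heS : e ∈ S) (hel : e ∉ l) :
    ∃ q ∈ l, ∃ f ∈ S, f ∉ l ∧ dst q = src f := by
  -- otherwise the targets of the edges of `l` are closed under `EdgeAdj`
  by_contra! hclosed
  have hreach : ∀ w, ReflTransGen (EdgeAdj src dst S) (dst p) w → ∃ q ∈ l, dst q = w := by
    intro w hw
    induction hw with
    | refl => exact ⟨p, hp, rfl⟩
    | tail _ hstep ih =>
      obtain ⟨q, hq, rfl⟩ := ih
      obtain ⟨f, hfS, hfq, rfl⟩ := hstep
      exact ⟨f, by_contra fun hfl => hclosed q hq f hfS hfl hfq.symm, rfl⟩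
  obtain ⟨q, hq, hqe⟩ := hreach (src e) (hconn _ _)
  exact hclosed q hq e heS hel hqe

variable [DecidableEq E]

theorem IsTrail_s14.length_le (hl : IsTrail_s14 src dst S l) : l.length ≤ #S := by
  rw [← List.toFinset_card_of_nodup hl.nodup]
  exact card_le_card fun e he => hl.mem e (List.mem_toFinset.1 he)

variable [DecidableEq V]

theorem IsTrail_s14.exists_edge_of_not_closed
    (hbal : ∀ v, #{e ∈ S | src e = v} = #{e ∈ S | dst e = v}) (hl : IsTrail_s14 src dst S l)
    (hne : l ≠ []) (hopen : dst (l.getLast hne) ≠ src (l.head hne)) :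
    ∃ f ∈ S, f ∉ l ∧ dst (l.getLast hne) = src f := by
  set v := dst (l.getLast hne)
  -- otherwise every edge of `S` leaving `v` is on the trail, which enters `v` once more than it
  -- leaves it
  by_contra! hfull
  have hcount : (l.map dst).count v = (l.map src).count v + 1 := by
    have := congrArg (List.count v) (hl.isChain.src_cons_map_dst hne)
    simpa [List.count_cons, hopen.symm, v] using this
  have hsrc : #{e ∈ S | src e = v} ≤ #{e ∈ l.toFinset | src e = v} :=
    card_le_card fun e he => by
      simp only [mem_filter, List.mem_toFinset] at he ⊢
      exact ⟨by_contra fun hel => hfull e he.1 hel he.2.symm, he.2⟩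
  have hdst : #{e ∈ l.toFinset | dst e = v} ≤ #{e ∈ S | dst e = v} :=
    card_le_card (filter_subset_filter _ fun e he => hl.mem e (List.mem_toFinset.1 he))
  rw [hl.nodup.card_filter_toFinset] at hsrc hdst
  have := hbal v
  omega

theorem IsTrail_s14.exists_longer
    (hbal : ∀ v, #{e ∈ S | src e = v} = #{e ∈ S | dst e = v})
    (hconn : ∀ u v, ReflTransGen (EdgeAdj src dst S) u v)
    (hl : IsTrail_s14 src dst S l)
    (hnot : ¬ (l.toFinset = S ∧ Cycle.Chain (fun x y => dst x = src y) (l : Cycle E))) :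
    ∃ l', IsTrail_s14 src dst S l' ∧ l.length < l'.length := by
  by_cases hcl : Cycle.Chain (fun x y => dst x = src y) (l : Cycle E)
  · have hsub : l.toFinset ⊆ S := fun e he => hl.mem e (List.mem_toFinset.1 he)
    obtain ⟨e, heS, hel⟩ := exists_of_ssubset (hsub.ssubset_of_ne fun h => hnot ⟨h, hcl⟩)
    rw [List.mem_toFinset] at hel
    rcases List.eq_nil_or_concat' l with rfl | ⟨_, p, rfl⟩
    · exact ⟨[e], hl.concat heS hel (by simp), by simp⟩
    obtain ⟨q, hq, f, hfS, hfl, hqf⟩ :=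
      exists_edge_leaving hconn (List.mem_concat_self ..) heS hel
    obtain ⟨l', hl', hperm, hlast⟩ := hl.exists_rotation_getLast?_eq hcl hq
    refine ⟨l' ++ [f], hl'.concat hfS (hperm.mem_iff.not.2 hfl) (by simpa [hlast]), ?_⟩
    simp [hperm.length_eq]
  · have hne : l ≠ [] := by rintro rfl; exact hcl (Cycle.Chain.nil _)
    have hopen : dst (l.getLast hne) ≠ src (l.head hne) := fun h => hcl <|
      (Cycle.chain_ne_nil _ hne).2 (hl.isChain.cons (by simp [List.head?_eq_some_head hne, h]))
    obtain ⟨f, hfS, hfl, hf⟩ := hl.exists_edge_of_not_closed hbal hne hopen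
    refine ⟨l ++ [f], hl.concat hfS hfl ?_, by simp⟩
    simp [List.getLast?_eq_some_getLast hne, hf]

theorem exists_eulerian_circuit
    (hbal : ∀ v, #{e ∈ S | src e = v} = #{e ∈ S | dst e = v})
    (hconn : ∀ u v, ReflTransGen (EdgeAdj src dst S) u v) :
    ∃ l : List E, l.Nodup ∧ l.toFinset = S ∧
      Cycle.Chain (fun x y => dst x = src y) (l : Cycle E) := by
  by_contra! hnone
  have hlong : ∀ n, ∃ l, IsTrail_s14 src dst S l ∧ n ≤ l.length := by
    intro n
    induction n with
    | zero => exact ⟨[], ⟨List.nodup_nil, by simp, List.isChain_nil⟩, le_rfl⟩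
    | succ n ih =>
      obtain ⟨l, hl, hn⟩ := ih
      obtain ⟨l', hl', hlt⟩ := hl.exists_longer hbal hconn fun h => hnone l hl.nodup h.1 h.2
      exact ⟨l', hl', by omega⟩
  obtain ⟨l, hl, hlen⟩ := hlong (#S + 1)
  have := hl.length_le
  omega

end Eulerian

section Words

variable {A : Type*} {k : ℕ}

theorem mem_wordsOf [Fintype A] {P : (Fin k → A) → Prop} {w : Fin k → A} :
    w ∈ wordsOf P ↔ P w := by
  simp [wordsOf]

theorem Fin.init_comp_finRotate (w : Fin (k + 1) → A) :
    Fin.init (w ∘ finRotate (k + 1)) = Fin.tail w := by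
  funext j
  simp [Fin.init, Fin.tail, finRotate_apply, Fin.coeSucc_eq_succ]

theorem Fin.init_comp_rev (w : Fin (k + 1) → A) :
    Fin.init (w ∘ Fin.rev) = Fin.tail w ∘ Fin.rev := by
  funext j
  simp [Fin.init, Fin.tail, Fin.rev_castSucc]

theorem Fin.tail_comp_rev (w : Fin (k + 1) → A) :
    Fin.tail (w ∘ Fin.rev) = Fin.init w ∘ Fin.rev := by
  funext j
  simp [Fin.init, Fin.tail, Fin.rev_succ]

theorem card_filter_init_eq_card_filter_tail_s14 [DecidableEq A] {S : Finset (Fin (k + 1) → A)}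
    (hS : ∀ w, w ∘ finRotate (k + 1) ∈ S ↔ w ∈ S) (v : Fin k → A) :
    #{w ∈ S | Fin.init w = v} = #{w ∈ S | Fin.tail w = v} := by
  symm
  refine card_nbij' (· ∘ finRotate (k + 1)) (· ∘ (finRotate (k + 1)).symm) ?_ ?_ ?_ ?_
  · intro w hw
    simp only [coe_filter, Set.mem_ofPred_eq] at hw ⊢
    rw [hS, Fin.init_comp_finRotate]
    exact hw
  · intro w hw
    simp only [coe_filter, Set.mem_ofPred_eq] at hw ⊢
    rw [← hS, ← Fin.init_comp_finRotate]
    simpa [Function.comp_assoc] using hw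
  · intro w _
    simp [Function.comp_assoc]
  · intro w _
    simp [Function.comp_assoc]

theorem reflTransGen_of_windows {S : Finset (Fin (k + 1) → A)} (s : ℕ → A) (K : ℕ)
    (hs : ∀ p < K, (fun j : Fin (k + 1) => s (p + j)) ∈ S) :
    ReflTransGen (EdgeAdj Fin.init Fin.tail S)
      (fun j : Fin k => s j) (fun j => s (K + j)) := by
  induction K with
  | zero => simpa using ReflTransGen.refl
  | succ K ih =>
    refine (ih fun p hp => hs p (by omega)).tail ⟨_, hs K K.lt_succ_self, rfl, ?_⟩
    funext j
    simp only [Fin.tail, Fin.val_succ]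
    ring_nf

theorem Relation.ReflTransGen.comp_rev {S : Finset (Fin (k + 1) → A)}
    (hS : ∀ w, w ∘ Fin.rev ∈ S ↔ w ∈ S) {u v : Fin k → A}
    (h : ReflTransGen (EdgeAdj Fin.init Fin.tail S) u v) :
    ReflTransGen (EdgeAdj Fin.init Fin.tail S) (v ∘ Fin.rev) (u ∘ Fin.rev) := by
  rw [← reflTransGen_swap]
  refine ReflTransGen.lift (· ∘ Fin.rev) ?_ u v h
  rintro x y ⟨e, heS, rfl, rfl⟩
  exact ⟨e ∘ Fin.rev, (hS e).2 heS, Fin.init_comp_rev e, Fin.tail_comp_rev e⟩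

theorem reflTransGen_const {S : Finset (Fin (k + 1) → A)} (hk : 2 ≤ k)
    (hS : ∀ w, ¬ Injective w → w ∈ S) (u : Fin k → A) (a : A) :
    ReflTransGen (EdgeAdj Fin.init Fin.tail S) u (fun _ => a) := by
  -- `u`, then `u 0` twice, then `a` forever: every window of length `k + 1` repeats a letter
  let s : ℕ → A := fun i =>
    if h : i < k then u ⟨i, h⟩ else if i < k + 2 then u ⟨0, by omega⟩ else a
  have hu : (fun j : Fin k => s j) = u := funext fun j => by simp [s]
  have ha : (fun j : Fin k => s (k + 2 + j)) = fun _ => a := funext fun j => by simp [s]; omega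
  refine hu ▸ ha ▸ reflTransGen_of_windows s (k + 2) fun p hp => hS _ ?_
  obtain ⟨i, j, hij, hjk, heq⟩ : ∃ i j, i < j ∧ j ≤ k ∧ s (p + i) = s (p + j) := by
    rcases Nat.eq_zero_or_pos p with rfl | hp0
    · exact ⟨0, k, by omega, le_rfl, by simp [s]⟩
    rcases Nat.lt_or_ge p (k + 1) with hpk | hpk
    · refine ⟨k - p, k + 1 - p, by omega, by omega, ?_⟩
      simp only [s, show p + (k - p) = k by omega, show p + (k + 1 - p) = k + 1 by omega]
      simp
    · refine ⟨1, 2, by omega, hk, ?_⟩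
      simp only [s]
      split_ifs <;> first | rfl | omega
  exact fun hinj => hij.ne (congrArg Fin.val (@hinj ⟨i, by omega⟩ ⟨j, by omega⟩ heq))

theorem reflTransGen_of_mem_iff_not_injective {S : Finset (Fin (k + 1) → A)} (hk : 2 ≤ k)
    (hS : ∀ w, w ∈ S ↔ ¬ Injective w) (u v : Fin k → A) :
    ReflTransGen (EdgeAdj Fin.init Fin.tail S) u v := by
  have hrev : ∀ w : Fin (k + 1) → A, w ∘ Fin.rev ∈ S ↔ w ∈ S := fun w => by
    simp only [hS, Injective.of_comp_iff' w Fin.rev_bijective]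
  have hconst := reflTransGen_const hk (fun w => (hS w).2)
  have hv := (hconst (v ∘ Fin.rev) (u ⟨0, by omega⟩)).comp_rev hrev
  simp only [Function.comp_assoc, Fin.rev_involutive.comp_self, Function.comp_id] at hv
  exact (hconst u _).trans hv

theorem Cycle.Chain.rel_get_add_one {α : Type*} {R : α → α → Prop} {l : List α}
    (hl : Cycle.Chain R (l : Cycle α)) [NeZero l.length] (i : Fin l.length) :
    R (l.get i) (l.get (i + 1)) := by
  rcases l with _ | ⟨a, t⟩
  · exact absurd rfl (NeZero.ne 0)
  rw [Cycle.chain_coe_cons, ← List.cons_append, List.isChain_iff_getElem] at hl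
  have := hl i (by simpa using i.is_lt)
  rw [List.getElem_append_left i.is_lt] at this
  rcases Fin.eq_castSucc_or_eq_last i with ⟨j, rfl⟩ | rfl
  · simpa [List.getElem_append_left] using this
  · simpa [List.getElem_append_left] using this

theorem apply_eq_apply_add_of_tail_eq_init {N : ℕ} {g : ZMod N → Fin (k + 1) → A}
    (hg : ∀ i, Fin.tail (g i) = Fin.init (g (i + 1))) (i : ZMod N) (j : Fin (k + 1)) :
    g i j = g (i + j.val) 0 := by
  induction j using Fin.induction generalizing i with
  | zero => simp
  | succ j ih =>
    have := congrFun (hg i) j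
    simp only [Fin.tail, Fin.init] at this
    rw [this, ih]
    congr 1
    simp only [Fin.val_castSucc, Fin.val_succ]
    push_cast
    ring

theorem hasUCycle_of_bijOn {S : Finset (Fin (k + 1) → A)} {N : ℕ} (hN : N = #S)
    {g : ZMod N → Fin (k + 1) → A} (hbij : Set.BijOn g Set.univ S)
    (hg : ∀ i, Fin.tail (g i) = Fin.init (g (i + 1))) : HasUCycle S := by
  subst hN
  refine ⟨fun i => g i 0, ?_⟩
  convert hbij using 1
  funext i j
  exact (apply_eq_apply_add_of_tail_eq_init hg i j).symm

theorem hasUCycle_of_cycle_chain [DecidableEq A] {S : Finset (Fin (k + 1) → A)}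
    {l : List (Fin (k + 1) → A)} (hne : l ≠ []) (hnd : l.Nodup) (hS : l.toFinset = S)
    (hl : Cycle.Chain (fun x y => Fin.tail x = Fin.init y) (l : Cycle (Fin (k + 1) → A))) :
    HasUCycle S := by
  have : NeZero l.length := ⟨by simpa using hne⟩
  let e := (ZMod.finEquiv l.length).symm
  refine hasUCycle_of_bijOn (g := fun i => l.get (e i))
    (by rw [← hS, List.toFinset_card_of_nodup hnd]) ?_ fun i => ?_
  · rw [← hS]
    refine ⟨fun i _ => by simp,
      fun i _ j _ h => e.injective (List.nodup_iff_injective_get.1 hnd h), fun w hw => ?_⟩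
    obtain ⟨n, rfl⟩ := List.mem_iff_get.1 (List.mem_toFinset.1 hw)
    exact ⟨e.symm n, trivial, by simp⟩
  · rw [map_add, map_one]
    exact hl.rel_get_add_one (e i)

end Words

/-- For `n ≥ 3`, a U-cycle of non-bijective words of length `n` over `Fin n` exists. -/
theorem ucycle_non_bijections (n : ℕ) (hn : 3 ≤ n) :
    HasUCycle (wordsOf (fun w : Fin n → Fin n => ¬ Function.Bijective w)) := by
  obtain ⟨k, rfl⟩ : ∃ k, n = k + 1 := ⟨n - 1, by omega⟩
  simp only [← Finite.injective_iff_bijective]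
  set S := wordsOf (fun w : Fin (k + 1) → Fin (k + 1) => ¬ Injective w)
  have hS : ∀ w, w ∈ S ↔ ¬ Injective w := fun w => mem_wordsOf
  have hrot : ∀ w, w ∘ finRotate (k + 1) ∈ S ↔ w ∈ S := fun w => by
    simp only [hS, Equiv.injective_comp]
  have hbal := card_filter_init_eq_card_filter_tail_s14 hrot
  have hconn := reflTransGen_of_mem_iff_not_injective (k := k) (by omega) hS
  obtain ⟨l, hnd, hlS, hl⟩ := exists_eulerian_circuit hbal hconn
  refine hasUCycle_of_cycle_chain ?_ hnd hlS hl
  rintro rfl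
  have hconst : (fun _ => 0) ∈ S :=
    (hS _).2 fun h => absurd (@h ⟨0, by omega⟩ ⟨1, by omega⟩ rfl) (by simp)
  simp [← hlS] at hconst
end
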